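/- arXiv:1110.0671 — 2 statements merged into one kernel-verified Lean document; each statement's English description precedes it below -/
import Mathlib

section
/- Let g : ℝ × ℝ → ℝ be defined by g(a,b) = max{ (1/4)(3 − 6√3·a·b + 6b²), (3/4)(1 + 2√3·a·b + 2b²), 3a² }. Then (1/3)·(1/(2π))·∫₀^{2π} g(cos θ, sin θ) dθ = (1/2)·(1 + 3√3/(2π)). (This is the mean square width of an equilateral triangle with unit side length.) -/
/-!
The triangle's edge vectors have length `√3` and directions `0`, `π/3`, `2π/3`, and the width in
direction `u` is the largest `|⟨u, e⟩|` over the edge vectors `e`; hence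
`g(cos θ, sin θ) = 3 max_k cos² (θ - kπ/3)`. This is `π/3`-periodic, and on `[π/6, π/2]` the edge
at angle `π/3` wins, so the integral over a full turn is `6 ∫_{-π/6}^{π/6} 3 cos² = 3π + 9√3/2`.
-/

open Real

/-- Squared-width function of the equilateral triangle with vertices
`(0,1)`, `(√3/2, −1/2)`, `(−√3/2, −1/2)` in direction `(a,b)` on the unit circle. -/
noncomputable def gTriangle (a b : ℝ) : ℝ :=
  max (max ((1/4) * (3 - 6 * Real.sqrt 3 * a * b + 6 * b ^ 2))
        ((3/4) * (1 + 2 * Real.sqrt 3 * a * b + 2 * b ^ 2)))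
    (3 * a ^ 2)

theorem Real.cos_sq_sub_cos_sq (x y : ℝ) : cos x ^ 2 - cos y ^ 2 = sin (y - x) * sin (y + x) := by
  rw [sin_sub, sin_add]
  linear_combination cos y ^ 2 * sin_sq_add_cos_sq x - cos x ^ 2 * sin_sq_add_cos_sq y

lemma gTriangle_cos_sin (θ : ℝ) :
    gTriangle (cos θ) (sin θ) =
      3 * max (max (cos (θ + π / 3) ^ 2) (cos (θ - π / 3) ^ 2)) (cos θ ^ 2) := by
  have h3 : √3 ^ 2 = 3 := sq_sqrt (by norm_num)
  have hθ := sin_sq_add_cos_sq θ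
  rw [mul_max_of_nonneg _ _ (by norm_num), mul_max_of_nonneg _ _ (by norm_num), gTriangle,
    cos_add, cos_sub, cos_pi_div_three, sin_pi_div_three]
  congr 2
  · linear_combination (-3 / 4 * sin θ ^ 2) * h3 - 3 / 4 * hθ
  · linear_combination (-3 / 4 * sin θ ^ 2) * h3 - 3 / 4 * hθ

lemma periodic_gTriangle_cos_sin :
    Function.Periodic (fun θ => gTriangle (cos θ) (sin θ)) (π / 3) := by
  intro θ
  simp only [gTriangle_cos_sin]
  rw [show θ + π / 3 + π / 3 = θ - π / 3 + π by ring, cos_add_pi, neg_sq, add_sub_cancel_right]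
  congr 1
  ac_rfl

lemma gTriangle_cos_sin_of_mem_Icc {θ : ℝ} (hθ : θ ∈ Set.Icc (π / 6) (π / 2)) :
    gTriangle (cos θ) (sin θ) = 3 * cos (θ - π / 3) ^ 2 := by
  obtain ⟨h₁, h₂⟩ := hθ
  have hπ := pi_pos
  have hsin : ∀ x, 0 ≤ x → x ≤ π → 0 ≤ sin x := fun x => sin_nonneg_of_nonneg_of_le_pi
  have hplus : cos (θ + π / 3) ^ 2 ≤ cos (θ - π / 3) ^ 2 := by
    rw [← sub_nonneg, cos_sq_sub_cos_sq]
    exact mul_nonneg (hsin _ (by linarith) (by linarith)) (hsin _ (by linarith) (by linarith))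
  have hzero : cos θ ^ 2 ≤ cos (θ - π / 3) ^ 2 := by
    rw [← sub_nonneg, cos_sq_sub_cos_sq]
    exact mul_nonneg (hsin _ (by linarith) (by linarith)) (hsin _ (by linarith) (by linarith))
  rw [gTriangle_cos_sin, max_eq_right hplus, max_eq_left hzero]

lemma integral_gTriangle_cos_sin_Icc :
    ∫ θ in π / 6..π / 2, gTriangle (cos θ) (sin θ) = π / 2 + 3 * √3 / 4 := by
  rw [intervalIntegral.integral_congr fun θ hθ => gTriangle_cos_sin_of_mem_Icc
      (Set.uIcc_of_le (by linarith [pi_pos] : π / 6 ≤ π / 2) ▸ hθ),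
    intervalIntegral.integral_const_mul, intervalIntegral.integral_comp_sub_right
      (fun x => cos x ^ 2), integral_cos_sq]
  rw [show π / 6 - π / 3 = -(π / 6) by ring, show π / 2 - π / 3 = π / 6 by ring, cos_neg, sin_neg,
    cos_pi_div_six, sin_pi_div_six]
  ring

/-- The mean square width of an equilateral triangle with unit side length is
`(1/2)(1 + 3√3/(2π))`. -/
theorem mean_square_width_equilateral_triangle :
    (1 / 3) * (1 / (2 * π)) *
      ∫ θ in (0:ℝ)..(2 * π), gTriangle (Real.cos θ) (Real.sin θ)
      = (1 / 2) * (1 + 3 * Real.sqrt 3 / (2 * π)) := by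
  have hint : ∀ t₁ t₂,
      IntervalIntegrable (fun θ => gTriangle (cos θ) (sin θ)) MeasureTheory.volume t₁ t₂ :=
    fun _ _ => Continuous.intervalIntegrable (by unfold gTriangle; fun_prop) _ _
  have hsix : ∫ θ in (0:ℝ)..2 * π, gTriangle (cos θ) (sin θ)
      = 6 * ∫ θ in π / 6..π / 2, gTriangle (cos θ) (sin θ) := by
    have h := periodic_gTriangle_cos_sin.intervalIntegral_add_zsmul_eq 6 0 hint
    rwa [periodic_gTriangle_cos_sin.intervalIntegral_add_eq 0 (π / 6), zero_add, zsmul_eq_mul,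
      zsmul_eq_mul, show ((6 : ℤ) : ℝ) * (π / 3) = 2 * π by push_cast; ring,
      show π / 6 + π / 3 = π / 2 by ring, Int.cast_ofNat] at h
  rw [hsix, integral_gTriangle_cos_sin_Icc]
  field_simp
  ring
end

section
/- For all real numbers a, b, c with a² + b² + c² = 1, max{ (4/3)a², (4/3)b², (4/3)c², (4/3)(1 + 2ab − c²), (4/3)(1 + 2ac − b²), (4/3)(1 − 2ab − c²), (4/3)(1 − 2ac − b²), (4/3)(b + c)², (4/3)(b − c)², (4/3)(1 + 2ab + 2ac + 2bc), (4/3)(1 + 2ab − 2ac − 2bc), (4/3)(1 − 2ab − 2ac + 2bc), (4/3)(1 − 2ab + 2ac − 2bc) } = max{ (4/3)(1 + 2ab + 2ac + 2bc), (4/3)(1 + 2ab − 2ac − 2bc), (4/3)(1 − 2ab − 2ac + 2bc), (4/3)(1 − 2ab + 2ac − 2bc) }. -/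
/-!
On the unit sphere every one of the thirteen quantities is `4/3` times a square: the four
retained ones are `(a ± b ± c)²`, and by `a² + b² + c² = 1` the other nine are the squares of
`a`, `b`, `c`, `a ± b`, `a ± c`, `b ± c`. Each of these nine numbers is half the sum or difference
of two of the signed sums `a ± b ± c`, and `((u ± v) / 2)² ≤ max u² v²`.
-/

lemma sq_le_max_sq_of_two_mul_eq_add {x u v : ℝ} (h : 2 * x = u + v) :
    x ^ 2 ≤ max (u ^ 2) (v ^ 2) := by
  have h4 : 4 * x ^ 2 = (u + v) ^ 2 := by rw [← h]; ring
  linarith [sq_nonneg (u - v), le_max_left (u ^ 2) (v ^ 2), le_max_right (u ^ 2) (v ^ 2)]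

lemma sq_le_max_sq_of_two_mul_eq_sub {x u v : ℝ} (h : 2 * x = u - v) :
    x ^ 2 ≤ max (u ^ 2) (v ^ 2) := by
  simpa only [neg_sq] using sq_le_max_sq_of_two_mul_eq_add (v := -v) (by rw [h, sub_eq_add_neg])

lemma max_sq_eq_max_sq_signed_sums (a b c : ℝ) :
    max (max (max (max (a ^ 2) (b ^ 2)) (max (c ^ 2) ((a + b) ^ 2)))
        (max (max ((a + c) ^ 2) ((a - b) ^ 2)) (max ((a - c) ^ 2) ((b + c) ^ 2))))
      (max (max ((b - c) ^ 2) (max ((a + b + c) ^ 2) ((a + b - c) ^ 2)))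
        (max ((a - b - c) ^ 2) ((a - b + c) ^ 2)))
      = max (max ((a + b + c) ^ 2) ((a + b - c) ^ 2)) (max ((a - b - c) ^ 2) ((a - b + c) ^ 2)) := by
  set M := max (max ((a + b + c) ^ 2) ((a + b - c) ^ 2)) (max ((a - b - c) ^ 2) ((a - b + c) ^ 2))
  have hp : (a + b + c) ^ 2 ≤ M := (le_max_left _ _).trans (le_max_left _ _)
  have hq : (a + b - c) ^ 2 ≤ M := (le_max_right _ _).trans (le_max_left _ _)
  have hr : (a - b - c) ^ 2 ≤ M := (le_max_left _ _).trans (le_max_right _ _)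
  have hs : (a - b + c) ^ 2 ≤ M := (le_max_right _ _).trans (le_max_right _ _)
  refine le_antisymm (max_le (max_le (max_le (max_le ?a ?b) (max_le ?c ?ab))
      (max_le (max_le ?ac ?a_b) (max_le ?a_c ?bc))) (max_le (max_le ?b_c (max_le hp hq))
      (max_le hr hs))) (max_le (le_max_of_le_right (le_max_of_le_left (le_max_right _ _)))
      (le_max_of_le_right (le_max_right _ _)))
  case a => exact (sq_le_max_sq_of_two_mul_eq_add (by ring)).trans (max_le hp hr)
  case b => exact (sq_le_max_sq_of_two_mul_eq_sub (by ring)).trans (max_le hp hs)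
  case c => exact (sq_le_max_sq_of_two_mul_eq_sub (by ring)).trans (max_le hp hq)
  case ab => exact (sq_le_max_sq_of_two_mul_eq_add (by ring)).trans (max_le hp hq)
  case ac => exact (sq_le_max_sq_of_two_mul_eq_add (by ring)).trans (max_le hp hs)
  case a_b => exact (sq_le_max_sq_of_two_mul_eq_add (by ring)).trans (max_le hr hs)
  case a_c => exact (sq_le_max_sq_of_two_mul_eq_add (by ring)).trans (max_le hq hr)
  case bc => exact (sq_le_max_sq_of_two_mul_eq_sub (by ring)).trans (max_le hp hr)
  case b_c => exact (sq_le_max_sq_of_two_mul_eq_sub (by ring)).trans (max_le hq hs)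

/-- For `(a,b,c)` on the unit sphere, the maximum of the thirteen squared distances arising
in the width computation for the cube reduces to a maximum over four terms. -/
theorem cube_width_max_simplification (a b c : ℝ) (habc : a ^ 2 + b ^ 2 + c ^ 2 = 1) :
    max (max (max (max ((4/3) * a ^ 2) ((4/3) * b ^ 2))
          (max ((4/3) * c ^ 2) ((4/3) * (1 + 2 * a * b - c ^ 2))))
        (max (max ((4/3) * (1 + 2 * a * c - b ^ 2)) ((4/3) * (1 - 2 * a * b - c ^ 2)))
          (max ((4/3) * (1 - 2 * a * c - b ^ 2)) ((4/3) * (b + c) ^ 2))))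
      (max (max ((4/3) * (b - c) ^ 2)
          (max ((4/3) * (1 + 2 * a * b + 2 * a * c + 2 * b * c))
            ((4/3) * (1 + 2 * a * b - 2 * a * c - 2 * b * c))))
        (max ((4/3) * (1 - 2 * a * b - 2 * a * c + 2 * b * c))
          ((4/3) * (1 - 2 * a * b + 2 * a * c - 2 * b * c))))
      = max (max ((4/3) * (1 + 2 * a * b + 2 * a * c + 2 * b * c))
            ((4/3) * (1 + 2 * a * b - 2 * a * c - 2 * b * c)))
          (max ((4/3) * (1 - 2 * a * b - 2 * a * c + 2 * b * c))
            ((4/3) * (1 - 2 * a * b + 2 * a * c - 2 * b * c))) := by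
  have hab : 1 + 2 * a * b - c ^ 2 = (a + b) ^ 2 := by linear_combination -habc
  have hac : 1 + 2 * a * c - b ^ 2 = (a + c) ^ 2 := by linear_combination -habc
  have ha_b : 1 - 2 * a * b - c ^ 2 = (a - b) ^ 2 := by linear_combination -habc
  have ha_c : 1 - 2 * a * c - b ^ 2 = (a - c) ^ 2 := by linear_combination -habc
  have hp : 1 + 2 * a * b + 2 * a * c + 2 * b * c = (a + b + c) ^ 2 := by linear_combination -habc
  have hq : 1 + 2 * a * b - 2 * a * c - 2 * b * c = (a + b - c) ^ 2 := by linear_combination -habc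
  have hr : 1 - 2 * a * b - 2 * a * c + 2 * b * c = (a - b - c) ^ 2 := by linear_combination -habc
  have hs : 1 - 2 * a * b + 2 * a * c - 2 * b * c = (a - b + c) ^ 2 := by linear_combination -habc
  rw [hab, hac, ha_b, ha_c, hp, hq, hr, hs]
  simp only [← mul_max_of_nonneg _ _ (by norm_num : (0 : ℝ) ≤ 4 / 3)]
  rw [max_sq_eq_max_sq_signed_sums]
end
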